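/- arXiv:2408.01109 — 2 statements merged into one kernel-verified Lean document; each statement's English description precedes it below -/
import Mathlib

section
/- For any integers n, m ≥ 0, every collection C of databases that is finitely axiomatizable by (n,m)-tgds and n-egds is (n,m)-local: for every database D, if C is (n,m)-locally embeddable in D, then D belongs to C. -/
namespace DB

/-- A relational database over a schema `S` with arity function `ar`,
with constants drawn from the type `Const`.  It has a finite domain and
one relation per relation symbol, whose tuples lie in the domain. -/
structure Database (S : Type) (ar : S → ℕ) (Const : Type) where
  dom : Finset Const
  rel : ∀ R : S, Set (Fin (ar R) → Const)
  rel_dom : ∀ R : S, ∀ t ∈ rel R, ∀ i, t i ∈ dom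

variable {S Const C1 C2 : Type} {ar : S → ℕ}

/-- A relational atom over a set `V` of variables: a relation symbol together
with a tuple of variables of the appropriate arity. -/
def Atom (S : Type) (ar : S → ℕ) (V : Type) : Type := Σ R : S, Fin (ar R) → V

/-- The atom `a` holds in `D` under the assignment `h`. -/
def holdsAtom {V : Type} (D : Database S ar Const) (h : V → Const) (a : Atom S ar V) : Prop :=
  (fun i => h (a.2 i)) ∈ D.rel a.1

/-- A tuple-generating dependency `∀ x̄ ∀ ȳ (φ(x̄,ȳ) → ∃ z̄ ψ(x̄,z̄))`.
The universally quantified variables are `Fin nx ⊕ Fin ny` (the frontier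
variables `x̄` being `Fin nx`), the existentially quantified ones `Fin nz`.
As the notation `φ(x̄,ȳ)` indicates, every universally quantified variable
occurs in the body, and the head is a non-empty conjunction of atoms. -/
structure TGD (S : Type) (ar : S → ℕ) where
  nx : ℕ
  ny : ℕ
  nz : ℕ
  body : List (Atom S ar (Fin nx ⊕ Fin ny))
  head : List (Atom S ar (Fin nx ⊕ Fin nz))
  head_ne : head ≠ []
  body_vars : ∀ v : Fin nx ⊕ Fin ny, ∃ a ∈ body, ∃ i, a.2 i = v

/-- A tgd is full if it has no existentially quantified variables. -/
def TGD.Full (σ : TGD S ar) : Prop := σ.nz = 0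

/-- Satisfaction of a tgd by a database. -/
def SatTGD (D : Database S ar Const) (σ : TGD S ar) : Prop :=
  ∀ h : Fin σ.nx ⊕ Fin σ.ny → Const,
    (∀ v, h v ∈ D.dom) →
    (∀ a ∈ σ.body, holdsAtom D h a) →
    ∃ g : Fin σ.nz → Const, (∀ v, g v ∈ D.dom) ∧
      ∀ a ∈ σ.head, holdsAtom D (Sum.elim (fun x => h (Sum.inl x)) g) a

/-- An equality-generating dependency `∀ x̄ (φ(x̄) → x_i = x_j)`, with a
non-empty body mentioning all of the variables `x̄`. -/
structure EGD (S : Type) (ar : S → ℕ) where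
  nx : ℕ
  body : List (Atom S ar (Fin nx))
  body_ne : body ≠ []
  body_vars : ∀ v : Fin nx, ∃ a ∈ body, ∃ i, a.2 i = v
  lhs : Fin nx
  rhs : Fin nx

/-- Satisfaction of an egd by a database. -/
def SatEGD (D : Database S ar Const) (θ : EGD S ar) : Prop :=
  ∀ h : Fin θ.nx → Const, (∀ v, h v ∈ D.dom) →
    (∀ a ∈ θ.body, holdsAtom D h a) → h θ.lhs = h θ.rhs

/-- `Sub D' D` : `D'` is a subdatabase of `D` (written `D' ⪯ D`). -/
def Sub (D' D : Database S ar Const) : Prop :=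
  D'.dom ⊆ D.dom ∧ ∀ R, D'.rel R = {t | t ∈ D.rel R ∧ ∀ i, t i ∈ D'.dom}

/-- A fact: a relation symbol together with a tuple of constants. -/
def Fact (S : Type) (ar : S → ℕ) (Const : Type) : Type := Σ R : S, Fin (ar R) → Const

/-- The set of facts of a database. -/
def facts (D : Database S ar Const) : Set (Fact S ar Const) := { f | f.2 ∈ D.rel f.1 }

/-- The active domain: the constants occurring in some fact. -/
def aadom (D : Database S ar Const) : Set Const := { c | ∃ f ∈ facts D, ∃ i, f.2 i = c }

/-- Renaming the constants of a fact. -/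
def mapFact (h : C1 → C2) (f : Fact S ar C1) : Fact S ar C2 := ⟨f.1, fun i => h (f.2 i)⟩

/-- The direct product `D ⊗ D'` of two databases. -/
def dprod (D : Database S ar C1) (D' : Database S ar C2) : Database S ar (C1 × C2) where
  dom := D.dom ×ˢ D'.dom
  rel R := { t | (fun i => (t i).1) ∈ D.rel R ∧ (fun i => (t i).2) ∈ D'.rel R }
  rel_dom := by
    rintro R t ⟨h1, h2⟩ i
    exact Finset.mem_product.mpr ⟨D.rel_dom R _ h1 i, D'.rel_dom R _ h2 i⟩

/-- The intersection `D ∩ D'` of two databases over the same constants: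
domain-wise and relation-wise intersection. -/
noncomputable def dinter (D D' : Database S ar Const) : Database S ar Const :=
  letI := Classical.decEq Const
  { dom := D.dom ∩ D'.dom
    rel := fun R => D.rel R ∩ D'.rel R
    rel_dom := by
      rintro R t ⟨h1, h2⟩ i
      exact Finset.mem_inter.mpr ⟨D.rel_dom R t h1 i, D'.rel_dom R t h2 i⟩ }

/-- Isomorphism of databases (possibly over different constant types). -/
def Iso (D : Database S ar C1) (D' : Database S ar C2) : Prop :=
  ∃ h : C1 → C2, Set.BijOn h ↑D.dom ↑D'.dom ∧
    ∀ R : S, ∀ t : Fin (ar R) → C1, (∀ i, t i ∈ D.dom) →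
      (t ∈ D.rel R ↔ (fun i => h (t i)) ∈ D'.rel R)

/-- A 1-critical database: singleton domain `{c}` and every relation is the
full relation `{c}^{ar(R)}`. -/
def OneCritical (D : Database S ar Const) : Prop :=
  ∃ c : Const, D.dom = {c} ∧ ∀ R : S, D.rel R = {fun _ => c}

/-- `C` is (finitely) axiomatized by the finite sets `Ts` of tgds and `Es` of egds. -/
def FinAx (C : Set (Database S ar Const)) (Ts : Set (TGD S ar)) (Es : Set (EGD S ar)) : Prop :=
  Ts.Finite ∧ Es.Finite ∧
    ∀ D : Database S ar Const, D ∈ C ↔ (∀ σ ∈ Ts, SatTGD D σ) ∧ (∀ θ ∈ Es, SatEGD D θ)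

/-- Domain independence: membership in `C` depends only on the set of facts. -/
def DomainIndependent (C : Set (Database S ar Const)) : Prop :=
  ∀ D ∈ C, ∀ D' : Database S ar Const, facts D' = facts D → D' ∈ C

/-- `n`-modularity. -/
def NModular (C : Set (Database S ar Const)) (n : ℕ) : Prop :=
  ∀ D : Database S ar Const, D ∉ C →
    ∃ D' : Database S ar Const, Sub D' D ∧ D'.dom.card ≤ n ∧ D' ∉ C

/-- Modularity: `n`-modularity for some `n`. -/
def Modular (C : Set (Database S ar Const)) : Prop := ∃ n, NModular C n

/-- Closure under subdatabases. -/
def ClosedSub (C : Set (Database S ar Const)) : Prop :=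
  ∀ D ∈ C, ∀ D' : Database S ar Const, Sub D' D → D' ∈ C

/-- Closure under (binary) intersections. -/
def ClosedInter (C : Set (Database S ar Const)) : Prop :=
  ∀ D ∈ C, ∀ D' ∈ C, dinter D D' ∈ C

/-- Closure under isomorphisms. -/
def ClosedIso (C : Set (Database S ar Const)) : Prop :=
  ∀ D ∈ C, ∀ D' : Database S ar Const, Iso D D' → D' ∈ C

/-- Closure under (binary) direct products, up to isomorphic copies over `Const`. -/
def ClosedProd (C : Set (Database S ar Const)) : Prop :=
  ∀ D ∈ C, ∀ D' ∈ C, ∃ E ∈ C, Iso (dprod D D') E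

/-- `C` is `(n,m)`-locally embeddable in `D`. -/
def LocEmb (C : Set (Database S ar Const)) (n m : ℕ) (D : Database S ar Const) : Prop :=
  ∀ E : Database S ar Const, Sub E D → (aadom E).ncard ≤ n →
    ∃ DE ∈ C, facts E ⊆ facts DE ∧
      ∀ D' : Database S ar Const,
        facts E ⊆ facts D' → Sub D' DE → (aadom D').ncard ≤ (aadom E).ncard + m →
        ∃ h : Const → Const,
          (∀ c ∈ aadom D', h c ∈ aadom D) ∧
          (∀ c ∈ aadom E, h c = c) ∧
          (∀ f ∈ facts D', mapFact h f ∈ facts D)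

/-- `(n,m)`-locality of a collection of databases. -/
def IsLocal (C : Set (Database S ar Const)) (n m : ℕ) : Prop :=
  ∀ D : Database S ar Const, LocEmb C n m D → D ∈ C

/-- The facts of `D` restricted to the set `A` of constants. -/
def restrictFacts (D : Database S ar Const) (A : Set Const) : Set (Fact S ar Const) :=
  { f | f ∈ facts D ∧ ∀ i, f.2 i ∈ A }


/-- The subdatabase of `D` induced by a finite set `A ⊆ D.dom`. -/
def restrictDB (D : Database S ar Const) (A : Finset Const) (hA : A ⊆ D.dom) :
    Database S ar Const where
  dom := A
  rel R := {t | t ∈ D.rel R ∧ ∀ i, t i ∈ A}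
  rel_dom := fun _ _ ht i => ht.2 i

lemma aadom_sub_dom (D : Database S ar Const) : aadom D ⊆ ↑D.dom := by
  rintro c ⟨f, hf, i, rfl⟩
  exact D.rel_dom f.1 f.2 hf i

lemma mem_aadom {D : Database S ar Const} {f : Fact S ar Const} (hf : f ∈ facts D)
    (i : Fin (ar f.1)) : f.2 i ∈ aadom D := ⟨f, hf, i, rfl⟩

lemma aadom_finite (D : Database S ar Const) : (aadom D).Finite :=
  D.dom.finite_toSet.subset (aadom_sub_dom D)

lemma aadom_mono {D E : Database S ar Const} (h : facts D ⊆ facts E) :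
    aadom D ⊆ aadom E := by
  rintro c ⟨f, hf, i, rfl⟩
  exact ⟨f, h hf, i, rfl⟩

/-- every collection of databases finitely axiomatizable by
(n,m)-tgds and n-egds is (n,m)-local. -/
theorem finax_is_local
    (har : ∀ R : S, 0 < ar R) (n m : ℕ)
    (C : Set (Database S ar Const)) (Ts : Set (TGD S ar)) (Es : Set (EGD S ar))
    (hax : FinAx C Ts Es)
    (hT : ∀ sigma ∈ Ts, sigma.nx + sigma.ny ≤ n ∧ sigma.nz ≤ m)
    (hE : ∀ theta ∈ Es, theta.nx ≤ n) :
    IsLocal C n m := by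
  classical
  intro D hloc
  obtain ⟨hTfin, hEfin, hiff⟩ := hax
  rw [hiff]
  refine ⟨?_, ?_⟩
  · -- tgds
    intro σ hσ h hhdom hbody
    set A0 : Finset Const := Finset.image h Finset.univ with hA0
    have hA0sub : A0 ⊆ D.dom := by
      intro c hc
      obtain ⟨v, _, rfl⟩ := Finset.mem_image.mp hc
      exact hhdom v
    set E := restrictDB D A0 hA0sub with hEdef
    have hsubE : Sub E D := ⟨hA0sub, fun R => rfl⟩
    have hfactsE : ∀ a ∈ σ.body,
        (⟨a.1, fun i => h (a.2 i)⟩ : Fact S ar Const) ∈ facts E := by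
      intro a ha
      exact ⟨hbody a ha, fun i => Finset.mem_image.mpr ⟨a.2 i, Finset.mem_univ _, rfl⟩⟩
    have hvals : ∀ v, h v ∈ aadom E := by
      intro v
      obtain ⟨a, ha, i, hi⟩ := σ.body_vars v
      have := mem_aadom (hfactsE a ha) i
      simpa [hi] using this
    have hcardE : (aadom E).ncard ≤ n := by
      have h1 : (aadom E).ncard ≤ A0.card := by
        calc (aadom E).ncard ≤ (↑A0 : Set Const).ncard :=
              Set.ncard_le_ncard (aadom_sub_dom E) A0.finite_toSet
          _ = A0.card := Set.ncard_coe_finset A0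
      have h2 : A0.card ≤ σ.nx + σ.ny := by
        calc A0.card ≤ (Finset.univ : Finset (Fin σ.nx ⊕ Fin σ.ny)).card :=
              Finset.card_image_le
          _ = σ.nx + σ.ny := by simp
      have := (hT σ hσ).1
      omega
    obtain ⟨DE, hDE, hfsub, hnbr⟩ := hloc E hsubE hcardE
    have hDEsat : SatTGD DE σ := ((hiff DE).1 hDE).1 σ hσ
    have haaE_DE : aadom E ⊆ aadom DE := aadom_mono hfsub
    obtain ⟨g, hgdom, hhead⟩ := hDEsat h
      (fun v => aadom_sub_dom DE (haaE_DE (hvals v)))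
      (fun a ha => hfsub (hfactsE a ha))
    have hfinE : (aadom E).Finite := aadom_finite E
    set A : Finset Const := hfinE.toFinset ∪ Finset.image g Finset.univ with hAdef
    have hAsub : A ⊆ DE.dom := by
      intro c hc
      rcases Finset.mem_union.mp hc with hc | hc
      · exact aadom_sub_dom DE (haaE_DE (hfinE.mem_toFinset.mp hc))
      · obtain ⟨v, _, rfl⟩ := Finset.mem_image.mp hc
        exact hgdom v
    set D' := restrictDB DE A hAsub with hD'def
    have hsubD' : Sub D' DE := ⟨hAsub, fun R => rfl⟩
    have hfED' : facts E ⊆ facts D' := by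
      intro f hf
      exact ⟨hfsub hf,
        fun i => Finset.mem_union.mpr (Or.inl (hfinE.mem_toFinset.mpr (mem_aadom hf i)))⟩
    have hcardD' : (aadom D').ncard ≤ (aadom E).ncard + m := by
      have h1 : (aadom D').ncard ≤ A.card := by
        calc (aadom D').ncard ≤ (↑A : Set Const).ncard :=
              Set.ncard_le_ncard (aadom_sub_dom D') A.finite_toSet
          _ = A.card := Set.ncard_coe_finset A
      have h2 : A.card ≤ hfinE.toFinset.card + σ.nz := by
        calc A.card ≤ hfinE.toFinset.card + (Finset.image g Finset.univ).card :=
              Finset.card_union_le _ _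
          _ ≤ hfinE.toFinset.card + σ.nz := by
              have : (Finset.image g Finset.univ).card ≤ σ.nz := by
                calc (Finset.image g Finset.univ).card
                    ≤ (Finset.univ : Finset (Fin σ.nz)).card := Finset.card_image_le
                  _ = σ.nz := by simp
              omega
      have h3 : hfinE.toFinset.card = (aadom E).ncard :=
        (Set.ncard_eq_toFinset_card (aadom E) hfinE).symm
      have := (hT σ hσ).2
      omega
    obtain ⟨h', hh'1, hh'2, hh'3⟩ := hnbr D' hfED' hsubD' hcardD'
    set h1 : Fin σ.nx → Const := fun x => h (Sum.inl x) with hh1def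
    have hheadD' : ∀ a ∈ σ.head,
        (⟨a.1, fun i => Sum.elim h1 g (a.2 i)⟩ : Fact S ar Const) ∈ facts D' := by
      intro a ha
      refine ⟨hhead a ha, fun i => ?_⟩
      cases hai : a.2 i with
      | inl x =>
        simp only [hai, Sum.elim_inl]
        exact Finset.mem_union.mpr (Or.inl (hfinE.mem_toFinset.mpr (hvals (Sum.inl x))))
      | inr v =>
        simp only [hai, Sum.elim_inr]
        exact Finset.mem_union.mpr
          (Or.inr (Finset.mem_image.mpr ⟨v, Finset.mem_univ _, rfl⟩))
    have hheadD : ∀ a ∈ σ.head,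
        (⟨a.1, fun i => h' (Sum.elim h1 g (a.2 i))⟩ : Fact S ar Const) ∈ facts D :=
      fun a ha => hh'3 _ (hheadD' a ha)
    obtain ⟨a0, ha0⟩ := List.exists_mem_of_ne_nil σ.head σ.head_ne
    have hd0 : h' (Sum.elim h1 g (a0.2 ⟨0, har a0.1⟩)) ∈ D.dom :=
      D.rel_dom a0.1 _ (hheadD a0 ha0) ⟨0, har a0.1⟩
    set d0 := h' (Sum.elim h1 g (a0.2 ⟨0, har a0.1⟩)) with hd0def
    set g'' : Fin σ.nz → Const :=
      fun v => if (∃ a ∈ σ.head, ∃ i, a.2 i = Sum.inr v) then h' (g v) else d0 with hg''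
    have hoccur : ∀ v, (∃ a ∈ σ.head, ∃ i, a.2 i = Sum.inr v) → h' (g v) ∈ aadom D := by
      rintro v ⟨a, ha, i, hi⟩
      apply hh'1
      refine ⟨_, hheadD' a ha, i, ?_⟩
      simp [hi]
    refine ⟨g'', ?_, ?_⟩
    · intro v
      by_cases hv : ∃ a ∈ σ.head, ∃ i, a.2 i = Sum.inr v
      · simp only [hg'', if_pos hv]
        exact aadom_sub_dom D (hoccur v hv)
      · simp only [hg'', if_neg hv]
        exact hd0
    · intro a ha
      have heq : (fun i => Sum.elim h1 g'' (a.2 i)) =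
          fun i => h' (Sum.elim h1 g (a.2 i)) := by
        funext i
        cases hai : a.2 i with
        | inl x =>
          simp only [Sum.elim_inl]
          exact (hh'2 (h1 x) (hvals (Sum.inl x))).symm
        | inr v =>
          have hv : ∃ a ∈ σ.head, ∃ i, a.2 i = Sum.inr v := ⟨a, ha, i, hai⟩
          simp only [Sum.elim_inr, hg'', if_pos hv]
      show (fun i => Sum.elim h1 g'' (a.2 i)) ∈ D.rel a.1
      rw [heq]
      exact hheadD a ha
  · -- egds
    intro θ hθ h hhdom hbody
    set A0 : Finset Const := Finset.image h Finset.univ with hA0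
    have hA0sub : A0 ⊆ D.dom := by
      intro c hc
      obtain ⟨v, _, rfl⟩ := Finset.mem_image.mp hc
      exact hhdom v
    set E := restrictDB D A0 hA0sub with hEdef
    have hsubE : Sub E D := ⟨hA0sub, fun R => rfl⟩
    have hfactsE : ∀ a ∈ θ.body,
        (⟨a.1, fun i => h (a.2 i)⟩ : Fact S ar Const) ∈ facts E := by
      intro a ha
      exact ⟨hbody a ha, fun i => Finset.mem_image.mpr ⟨a.2 i, Finset.mem_univ _, rfl⟩⟩
    have hvals : ∀ v, h v ∈ aadom E := by
      intro v
      obtain ⟨a, ha, i, hi⟩ := θ.body_vars v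
      have := mem_aadom (hfactsE a ha) i
      simpa [hi] using this
    have hcardE : (aadom E).ncard ≤ n := by
      have h1 : (aadom E).ncard ≤ A0.card := by
        calc (aadom E).ncard ≤ (↑A0 : Set Const).ncard :=
              Set.ncard_le_ncard (aadom_sub_dom E) A0.finite_toSet
          _ = A0.card := Set.ncard_coe_finset A0
      have h2 : A0.card ≤ θ.nx := by
        calc A0.card ≤ (Finset.univ : Finset (Fin θ.nx)).card := Finset.card_image_le
          _ = θ.nx := by simp
      have := hE θ hθ
      omega
    obtain ⟨DE, hDE, hfsub, hnbr⟩ := hloc E hsubE hcardE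
    have haaE_DE : aadom E ⊆ aadom DE := aadom_mono hfsub
    exact ((hiff DE).1 hDE).2 θ hθ h
      (fun v => aadom_sub_dom DE (haaE_DE (hvals v)))
      (fun a ha => hfsub (hfactsE a ha))

end DB
end

section
/- McKinsey's elimination of disjunctions for direct products: Let C be a collection of databases over schema S closed under (binary, hence finite) direct products and under isomorphisms. Let δ = ∀x̄ (φ(x̄) → ⋁_{i=1}^{k} ψ_i(x̄_i)) be an existential disjunctive dependency where each ψ_i is either an equality y=z or a formula ∃ȳ_i χ_i(x̄_i, ȳ_i) with χ_i a non-empty conjunction of relational atoms. If every database in C satisfies δ, then there exists j ∈ [k] such that every database in C satisfies ∀x̄ (φ(x̄) → ψ_j(x̄_j)). -/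
namespace DB

variable {S Const C1 C2 : Type} {ar : S → ℕ}

/-- A disjunct of an existential disjunctive dependency over universal
variables `Fin n`: an equality, or an existentially quantified conjunction of
atoms. -/
inductive EDisjunct (S : Type) (ar : S → ℕ) (n : ℕ) where
  | eq (y z : Fin n)
  | ex (nz : ℕ) (chi : List (Atom S ar (Fin n ⊕ Fin nz)))

/-- The disjunct holds in `D` under the assignment `h` of the universal
variables. -/
def holdsEDisjunct {n : ℕ} (D : Database S ar Const) (h : Fin n → Const) :
    EDisjunct S ar n → Prop
  | .eq y z => h y = h z
  | .ex nz chi =>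
      ∃ g : Fin nz → Const, (∀ v, g v ∈ D.dom) ∧
        ∀ a ∈ chi, holdsAtom D (Sum.elim h g) a

/-- The conjunction of atoms of an existential disjunct is non-empty. -/
def EDisjunct.NonEmptyEx {n : ℕ} : EDisjunct S ar n → Prop
  | .eq _ _ => True
  | .ex _ chi => chi ≠ []

/-- An existential disjunctive dependency `∀ x̄ (φ(x̄) → ⋁ᵢ ψᵢ(x̄ᵢ))`,
where `φ` is a possibly empty conjunction of atoms. -/
structure EDD (S : Type) (ar : S → ℕ) where
  nx : ℕ
  body : List (Atom S ar (Fin nx))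
  disj : List (EDisjunct S ar nx)

/-- Satisfaction of an existential disjunctive dependency. -/
def SatEDD (D : Database S ar Const) (delta : EDD S ar) : Prop :=
  ∀ h : Fin delta.nx → Const, (∀ v, h v ∈ D.dom) →
    (∀ a ∈ delta.body, holdsAtom D h a) → ∃ d ∈ delta.disj, holdsEDisjunct D h d

section McKinseyAux

variable {n : ℕ}

/-- Transfer of a body atom along an isomorphism (forward direction). -/
lemma iso_holdsAtom {D : Database S ar C1} {E : Database S ar C2}
    (f : C1 → C2) (hbij : Set.BijOn f ↑D.dom ↑E.dom)
    (hrel : ∀ R : S, ∀ t : Fin (ar R) → C1, (∀ i, t i ∈ D.dom) →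
      (t ∈ D.rel R ↔ (fun i => f (t i)) ∈ E.rel R))
    (h : Fin n → C1) (hdom : ∀ v, h v ∈ D.dom)
    (a : Atom S ar (Fin n)) (ha : holdsAtom D h a) :
    holdsAtom E (fun v => f (h v)) a :=
  (hrel a.1 (fun i => h (a.2 i)) (fun _ => hdom _)).mp ha

/-- Pulling back a disjunct along an isomorphism. -/
lemma iso_holdsEDisjunct {D : Database S ar C1} {E : Database S ar C2}
    (f : C1 → C2) (hbij : Set.BijOn f ↑D.dom ↑E.dom)
    (hrel : ∀ R : S, ∀ t : Fin (ar R) → C1, (∀ i, t i ∈ D.dom) →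
      (t ∈ D.rel R ↔ (fun i => f (t i)) ∈ E.rel R))
    (h : Fin n → C1) (hdom : ∀ v, h v ∈ D.dom)
    (d : EDisjunct S ar n) (hd : holdsEDisjunct E (fun v => f (h v)) d) :
    holdsEDisjunct D h d := by
  cases d with
  | eq y z =>
      exact hbij.injOn (Finset.mem_coe.mpr (hdom y)) (Finset.mem_coe.mpr (hdom z)) hd
  | ex nz chi =>
      obtain ⟨g, hgdom, hatoms⟩ := hd
      have hsur : ∀ v : Fin nz, ∃ x, x ∈ (↑D.dom : Set C1) ∧ f x = g v := by
        intro v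
        exact hbij.surjOn (Finset.mem_coe.mpr (hgdom v))
      choose g' hg'dom hg'f using hsur
      refine ⟨g', fun v => Finset.mem_coe.mp (hg'dom v), fun a ha => ?_⟩
      have hmem : ∀ i, Sum.elim h g' (a.2 i) ∈ D.dom := by
        intro i
        cases a.2 i with
        | inl x => exact hdom x
        | inr z => exact Finset.mem_coe.mp (hg'dom z)
      have heq : (fun i => f (Sum.elim h g' (a.2 i))) =
          fun i => Sum.elim (fun v => f (h v)) g (a.2 i) := by
        funext i
        cases a.2 i with
        | inl x => rfl
        | inr z => exact hg'f z
      have := hatoms a ha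
      refine (hrel a.1 (fun i => Sum.elim h g' (a.2 i)) hmem).mpr ?_
      rw [heq]
      exact this

/-- Projecting a disjunct from a direct product to the first factor. -/
lemma prod_holdsEDisjunct_fst {D1 : Database S ar C1} {D2 : Database S ar C2}
    (h : Fin n → C1 × C2) (d : EDisjunct S ar n)
    (hd : holdsEDisjunct (dprod D1 D2) h d) :
    holdsEDisjunct D1 (fun v => (h v).1) d := by
  cases d with
  | eq y z => exact congrArg Prod.fst hd
  | ex nz chi =>
      obtain ⟨g, hgdom, hatoms⟩ := hd
      refine ⟨fun v => (g v).1, fun v => (Finset.mem_product.mp (hgdom v)).1,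
        fun a ha => ?_⟩
      have := (hatoms a ha).1
      have heq : (fun i => (Sum.elim h g (a.2 i)).1) =
          fun i => Sum.elim (fun v => (h v).1) (fun v => (g v).1) (a.2 i) := by
        funext i
        cases a.2 i with
        | inl x => rfl
        | inr z => rfl
      rw [heq] at this
      exact this

/-- Projecting a disjunct from a direct product to the second factor. -/
lemma prod_holdsEDisjunct_snd {D1 : Database S ar C1} {D2 : Database S ar C2}
    (h : Fin n → C1 × C2) (d : EDisjunct S ar n)
    (hd : holdsEDisjunct (dprod D1 D2) h d) :
    holdsEDisjunct D2 (fun v => (h v).2) d := by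
  cases d with
  | eq y z => exact congrArg Prod.snd hd
  | ex nz chi =>
      obtain ⟨g, hgdom, hatoms⟩ := hd
      refine ⟨fun v => (g v).2, fun v => (Finset.mem_product.mp (hgdom v)).2,
        fun a ha => ?_⟩
      have := (hatoms a ha).2
      have heq : (fun i => (Sum.elim h g (a.2 i)).2) =
          fun i => Sum.elim (fun v => (h v).2) (fun v => (g v).2) (a.2 i) := by
        funext i
        cases a.2 i with
        | inl x => rfl
        | inr z => rfl
      rw [heq] at this
      exact this

/-- Combining counterexamples via products: if each disjunct of `l` can be
refuted somewhere in `C` by an assignment satisfying `body`, then one single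
database of `C` refutes all of them simultaneously. -/
lemma counterexample_prod
    (C : Set (Database S ar Const)) (hprod : ClosedProd C)
    (body : List (Atom S ar (Fin n))) :
    ∀ l : List (EDisjunct S ar n), l ≠ [] →
    (∀ d ∈ l, ∃ D ∈ C, ∃ h : Fin n → Const, (∀ v, h v ∈ D.dom) ∧
       (∀ a ∈ body, holdsAtom D h a) ∧ ¬ holdsEDisjunct D h d) →
    ∃ D ∈ C, ∃ h : Fin n → Const, (∀ v, h v ∈ D.dom) ∧
       (∀ a ∈ body, holdsAtom D h a) ∧ ∀ d ∈ l, ¬ holdsEDisjunct D h d := by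
  intro l
  induction l with
  | nil => intro hne; exact absurd rfl hne
  | cons d l' ih =>
      intro _ hhyp
      obtain ⟨D1, hD1, h1, hdom1, hbody1, hfail1⟩ := hhyp d List.mem_cons_self
      cases hl' : l' with
      | nil =>
          subst hl'
          refine ⟨D1, hD1, h1, hdom1, hbody1, fun d' hd' => ?_⟩
          rcases List.mem_cons.mp hd' with h | h
          · subst h; exact hfail1
          · exact absurd h List.not_mem_nil
      | cons e t =>
          subst hl'
          obtain ⟨D2, hD2, h2, hdom2, hbody2, hfail2⟩ :=
            ih (List.cons_ne_nil e t)
              (fun d' hd' => hhyp d' (List.mem_cons_of_mem d hd'))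
          obtain ⟨E, hE, f, hbij, hrel⟩ := hprod D1 hD1 D2 hD2
          set h : Fin n → Const × Const := fun v => (h1 v, h2 v) with hh
          have hdomP : ∀ v, h v ∈ (dprod D1 D2).dom := by
            intro v
            exact Finset.mem_product.mpr ⟨hdom1 v, hdom2 v⟩
          have hbodyP : ∀ a ∈ body, holdsAtom (dprod D1 D2) h a := by
            intro a ha
            exact ⟨hbody1 a ha, hbody2 a ha⟩
          refine ⟨E, hE, fun v => f (h v), ?_, ?_, ?_⟩
          · intro v
            exact Finset.mem_coe.mp (hbij.mapsTo (Finset.mem_coe.mpr (hdomP v)))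
          · intro a ha
            exact iso_holdsAtom f hbij hrel h hdomP a (hbodyP a ha)
          · intro d' hd' hcontra
            have hP : holdsEDisjunct (dprod D1 D2) h d' :=
              iso_holdsEDisjunct f hbij hrel h hdomP d' hcontra
            rcases List.mem_cons.mp hd' with hcase | hcase
            · subst hcase
              exact hfail1 (prod_holdsEDisjunct_fst h d' hP)
            · exact hfail2 d' hcase (prod_holdsEDisjunct_snd h d' hP)

end McKinseyAux

/-- McKinsey's elimination of disjunctions for collections closed
under direct products (and isomorphisms): if every database of `C` satisfies
the existential disjunctive dependency, then some single disjunct already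
works throughout `C`. -/
theorem mckinsey_elimination_products
    (har : ∀ R : S, 0 < ar R)
    (C : Set (Database S ar Const)) (hiso : ClosedIso C) (hprod : ClosedProd C)
    (delta : EDD S ar) (hk : delta.disj ≠ [])
    (hne : ∀ d ∈ delta.disj, d.NonEmptyEx)
    (hall : ∀ D ∈ C, SatEDD D delta) :
    ∃ d ∈ delta.disj, ∀ D ∈ C,
      ∀ h : Fin delta.nx → Const, (∀ v, h v ∈ D.dom) →
        (∀ a ∈ delta.body, holdsAtom D h a) → holdsEDisjunct D h d := by
  by_contra hcon
  push_neg at hcon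
  obtain ⟨D, hD, h, hdom, hbody, hfail⟩ :=
    counterexample_prod C hprod delta.body delta.disj hk hcon
  obtain ⟨d, hd, hholds⟩ := hall D hD h hdom hbody
  exact hfail d hd hholds

end DB
end
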